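/- Let n ≥ 4, let T be a triangulation of the n-gon, and let T⁺ = T ∪ {{n−1, 0}} be its subdivision at the boundary edge {n−1, 0}, a triangulation of the (n+1)-gon. Then 2·TCL(T⁺) ≤ 2·TCL(T) + n + 1; moreover, if T contains a diameter then 2·TCL(T⁺) ≤ 2·TCL(T) + n. -/
import Mathlib


open scoped Classical

/-- The cyclic distance between two vertices of the `n`-gon labeled by `ZMod n`:
`min (k, n - k)` where `k` is the representative of `b - a`. -/
def cycDist {n : ℕ} (a b : ZMod n) : ℕ := min (b - a).val (a - b).val

/-- The length of an unordered pair of vertices (in particular, of a chord). -/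
def chordLen {n : ℕ} (p : Sym2 (ZMod n)) : ℕ :=
  Sym2.lift ⟨fun a b => cycDist a b, fun _ _ => min_comm _ _⟩ p

/-- `x` lies strictly inside the clockwise arc from `a` to `b`. -/
def InArc {n : ℕ} (a b x : ZMod n) : Prop :=
  0 < (x - a).val ∧ (x - a).val < (b - a).val

/-- Two chords cross: their four endpoints are distinct and exactly one endpoint of the
second chord lies strictly inside the clockwise arc from `a` to `b`. -/
def Crosses {n : ℕ} (p q : Sym2 (ZMod n)) : Prop :=
  ∃ a b c d : ZMod n, p = s(a, b) ∧ q = s(c, d) ∧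
    a ≠ b ∧ a ≠ c ∧ a ≠ d ∧ b ≠ c ∧ b ≠ d ∧ c ≠ d ∧
    Xor' (InArc a b c) (InArc a b d)

/-- A triangulation of the `n`-gon: a set of `n - 3` pairwise non-crossing chords
(each chord having length at least 2). -/
def IsTriangulation (n : ℕ) (T : Finset (Sym2 (ZMod n))) : Prop :=
  T.card = n - 3 ∧ (∀ p ∈ T, 2 ≤ chordLen p) ∧
    ∀ p ∈ T, ∀ q ∈ T, p ≠ q → ¬ Crosses p q

/-- The total chord length of a triangulation. -/
def TCL (n : ℕ) (T : Finset (Sym2 (ZMod n))) : ℕ := ∑ p ∈ T, chordLen p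

/-- A diameter is a chord of length `n / 2` (only possible for `n` even). -/
def IsDiameter {n : ℕ} (p : Sym2 (ZMod n)) : Prop := 2 * chordLen p = n

/-- The chord `p` layers the boundary edge `{i, i + 1}`: the edge lies on the (strictly)
shorter of the two arcs between the endpoints of `p`.  (Diameters never layer an edge.) -/
def LayersEdge {n : ℕ} (p : Sym2 (ZMod n)) (i : ZMod n) : Prop :=
  ∃ a b : ZMod n, p = s(a, b) ∧ (b - a).val < (a - b).val ∧ (i - a).val < (b - a).val

/-- The doubled layer number of the boundary edge `{i, i + 1}`:
twice the number of non-diameter chords layering it, plus the number of diameters. -/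
noncomputable def mT (n : ℕ) (T : Finset (Sym2 (ZMod n))) (i : ZMod n) : ℕ :=
  2 * (T.filter (fun p => LayersEdge p i ∧ ¬ IsDiameter p)).card +
    (T.filter (fun p => IsDiameter p)).card

/-- Subdivision of a triangulation of the `n`-gon at the boundary edge `{n-1, 0}`:
re-embed all chords (via representatives in `{0, …, n-1}`) into the `(n+1)`-gon, whose new
vertex `n` lies between `n - 1` and `0`, and add the chord `{n - 1, 0}`. -/
def subdiv (n : ℕ) (T : Finset (Sym2 (ZMod n))) : Finset (Sym2 (ZMod (n + 1))) :=
  T.image (Sym2.map (fun a : ZMod n => ((a.val : ℕ) : ZMod (n + 1)))) ∪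
    {s(((n - 1 : ℕ) : ZMod (n + 1)), (0 : ZMod (n + 1)))}

/-- Doubling construction: subdivide every boundary edge of the `m`-gon (old vertex `a`
becomes `2a` in the `2m`-gon) and add the chord `{2a, 2a+2}` over each new vertex. -/
def doubleTri (m : ℕ) (T : Finset (Sym2 (ZMod m))) : Finset (Sym2 (ZMod (2 * m))) :=
  T.image (Sym2.map (fun a : ZMod m => ((2 * a.val : ℕ) : ZMod (2 * m)))) ∪
    (Finset.range m).image
      (fun a : ℕ => s(((2 * a : ℕ) : ZMod (2 * m)), ((2 * a + 2 : ℕ) : ZMod (2 * m))))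

namespace SubdivAux

/-- The "gap" of a pair: difference of value representatives. -/
def gap {n : ℕ} (p : Sym2 (ZMod n)) : ℕ :=
  Sym2.lift ⟨fun a b => max a.val b.val - min a.val b.val,
    fun a b => by simp [Nat.max_comm, Nat.min_comm]⟩ p

lemma gap_mk {n : ℕ} (a b : ZMod n) :
    gap s(a, b) = max a.val b.val - min a.val b.val := rfl

lemma chordLen_mk {n : ℕ} (a b : ZMod n) :
    chordLen s(a, b) = min (b - a).val (a - b).val := rfl

lemma exists_rep_le {n : ℕ} (p : Sym2 (ZMod n)) :
    ∃ a b : ZMod n, p = s(a, b) ∧ a.val ≤ b.val := by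
  induction p using Sym2.inductionOn with
  | hf a b =>
    rcases le_total a.val b.val with h | h
    · exact ⟨a, b, rfl, h⟩
    · exact ⟨b, a, Sym2.eq_swap.symm, h⟩

lemma sub_vals {n : ℕ} [NeZero n] {a b : ZMod n} (h : a.val < b.val) :
    (b - a).val = b.val - a.val ∧ (a - b).val = n - (b.val - a.val) := by
  have h1 : (b - a).val = b.val - a.val := ZMod.val_sub h.le
  refine ⟨h1, ?_⟩
  have hne : b - a ≠ 0 := by
    intro h0
    rw [h0, ZMod.val_zero] at h1
    omega
  have h2 : a - b = -(b - a) := by ring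
  rw [h2, ZMod.neg_val, if_neg hne, h1]

lemma gap_lt {n : ℕ} [NeZero n] (p : Sym2 (ZMod n)) : gap p < n := by
  induction p using Sym2.inductionOn with
  | hf a b =>
    have ha := a.val_lt
    have hb := b.val_lt
    rw [gap_mk]
    omega

lemma chordLen_eq_gap {n : ℕ} [NeZero n] (p : Sym2 (ZMod n)) :
    chordLen p = min (gap p) (n - gap p) := by
  obtain ⟨a, b, rfl, hab⟩ := exists_rep_le p
  rcases eq_or_lt_of_le hab with h | h
  · have hab' : a = b := ZMod.val_injective n h
    subst hab'
    simp [chordLen_mk, gap_mk]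
  · obtain ⟨h1, h2⟩ := sub_vals h
    rw [chordLen_mk, gap_mk, h1, h2, max_eq_right hab, min_eq_left hab]

lemma val_f {n : ℕ} [NeZero n] (a : ZMod n) :
    ((a.val : ZMod (n + 1))).val = a.val :=
  ZMod.val_cast_of_lt (lt_trans a.val_lt (Nat.lt_succ_self n))

lemma chordLen_map {n : ℕ} [NeZero n] (p : Sym2 (ZMod n)) :
    chordLen (Sym2.map (fun a : ZMod n => ((a.val : ℕ) : ZMod (n + 1))) p)
      = chordLen p + (if n < 2 * gap p then 1 else 0) := by
  obtain ⟨a, b, rfl, hab⟩ := exists_rep_le p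
  rw [Sym2.map_pair_eq]
  rcases eq_or_lt_of_le hab with h | h
  · have hab' : a = b := ZMod.val_injective n h
    subst hab'
    simp [chordLen_mk, gap_mk]
  · have hfa : ((a.val : ZMod (n + 1))).val = a.val := val_f a
    have hfb : ((b.val : ZMod (n + 1))).val = b.val := val_f b
    have h' : ((a.val : ZMod (n + 1))).val < ((b.val : ZMod (n + 1))).val := by
      rw [hfa, hfb]; exact h
    obtain ⟨h1, h2⟩ := sub_vals h
    obtain ⟨h1', h2'⟩ := sub_vals h'
    rw [hfa, hfb] at h1' h2'
    rw [chordLen_mk, chordLen_mk, gap_mk, h1, h2, h1', h2',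
      max_eq_right hab, min_eq_left hab]
    have hbn := b.val_lt
    rcases Nat.lt_or_ge n (2 * (b.val - a.val)) with hc | hc
    · rw [if_pos hc]
      omega
    · rw [if_neg (by omega)]
      omega

lemma crosses_aux {n : ℕ} [NeZero n] {a b c e : ZMod n}
    (hab : a.val < b.val) (hce : c.val < e.val)
    (hgap : b.val - a.val = e.val - c.val) (hbig : n < 2 * (b.val - a.val))
    (hac : a.val < c.val) : Crosses s(a, b) s(c, e) := by
  have hbn := b.val_lt
  have hen := e.val_lt
  have hvne : ∀ x y : ZMod n, x.val ≠ y.val → x ≠ y := by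
    intro x y hxy h
    exact hxy (by rw [h])
  refine ⟨a, b, c, e, rfl, rfl,
    hvne _ _ (by omega), hvne _ _ (by omega), hvne _ _ (by omega),
    hvne _ _ (by omega), hvne _ _ (by omega), hvne _ _ (by omega), ?_⟩
  have hca : (c - a).val = c.val - a.val := (sub_vals hac).1
  have hba : (b - a).val = b.val - a.val := (sub_vals hab).1
  have hea : (e - a).val = e.val - a.val := (sub_vals (by omega : a.val < e.val)).1
  left
  constructor
  · constructor
    · rw [hca]; omega
    · rw [hca, hba]; omega
  · intro hin
    obtain ⟨_, h2⟩ := hin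
    rw [hea, hba] at h2
    omega

lemma gap_inj {n : ℕ} [NeZero n] {T : Finset (Sym2 (ZMod n))}
    (hT : IsTriangulation n T) {p q : Sym2 (ZMod n)} (hp : p ∈ T) (hq : q ∈ T)
    (hgp : n < 2 * gap p) (hgq : n < 2 * gap q) (hpq : gap p = gap q) : p = q := by
  by_contra hne
  obtain ⟨a, b, rfl, hab⟩ := exists_rep_le p
  obtain ⟨c, e, rfl, hce⟩ := exists_rep_le q
  rw [gap_mk, max_eq_right hab, min_eq_left hab] at hgp hpq
  rw [gap_mk, max_eq_right hce, min_eq_left hce] at hgq hpq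
  have hab' : a.val < b.val := by omega
  have hce' : c.val < e.val := by omega
  rcases Nat.lt_trichotomy a.val c.val with h | h | h
  · exact hT.2.2 _ hp _ hq hne (crosses_aux hab' hce' hpq hgp h)
  · have hac : a = c := ZMod.val_injective n h
    have hbe : b = e := ZMod.val_injective n (by omega)
    exact hne (by rw [hac, hbe])
  · exact hT.2.2 _ hq _ hp (Ne.symm hne) (crosses_aux hce' hab' hpq.symm hgq h)

end SubdivAux

/-- For `n ≥ 4` and a triangulation `T` of the `n`-gon, the subdivision
`T⁺` at the boundary edge `{n-1, 0}` satisfies `2·TCL(T⁺) ≤ 2·TCL(T) + n + 1`; moreover, if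
`T` contains a diameter then `2·TCL(T⁺) ≤ 2·TCL(T) + n`. -/
theorem subdiv_TCL_le (n : ℕ) (hn : 4 ≤ n) (T : Finset (Sym2 (ZMod n)))
    (hT : IsTriangulation n T) :
    2 * TCL (n + 1) (subdiv n T) ≤ 2 * TCL n T + n + 1 ∧
    ((∃ p ∈ T, IsDiameter p) → 2 * TCL (n + 1) (subdiv n T) ≤ 2 * TCL n T + n) := by
  haveI : NeZero n := ⟨by omega⟩
  open SubdivAux in
  set f : ZMod n → ZMod (n + 1) := fun a => ((a.val : ℕ) : ZMod (n + 1)) with hf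
  have hfinj : Function.Injective f := by
    intro a b h
    exact ZMod.val_injective n (by rw [← val_f a, ← val_f b]; exact congrArg ZMod.val h)
  -- the new chord has length 2
  have hnew : chordLen (s(((n - 1 : ℕ) : ZMod (n + 1)), (0 : ZMod (n + 1)))) = 2 := by
    have hx : ((n - 1 : ℕ) : ZMod (n + 1)) = -2 := by
      have h1 : ((n - 1 : ℕ) : ZMod (n + 1)) + 2 = ((n + 1 : ℕ) : ZMod (n + 1)) := by
        have : ((n - 1 : ℕ) : ZMod (n + 1)) + ((2 : ℕ) : ZMod (n + 1))
            = (((n - 1) + 2 : ℕ) : ZMod (n + 1)) := by push_cast; ring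
        rw [show ((n - 1) + 2 : ℕ) = n + 1 by omega] at this
        simpa using this
      rw [ZMod.natCast_self] at h1
      linear_combination h1
    rw [chordLen_mk, hx]
    have h2 : ((0 : ZMod (n + 1)) - (-2)) = ((2 : ℕ) : ZMod (n + 1)) := by push_cast; ring
    have h3 : ((-2 : ZMod (n + 1)) - 0) = (((n - 1 : ℕ)) : ZMod (n + 1)) := by
      rw [← hx]; ring
    rw [h2, h3, ZMod.val_cast_of_lt (by omega : 2 < n + 1),
      ZMod.val_cast_of_lt (by omega : n - 1 < n + 1)]
    omega
  -- sum over the subdivision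
  have himg : ∑ p ∈ T.image (Sym2.map f), chordLen p
      = ∑ p ∈ T, chordLen (Sym2.map f p) :=
    Finset.sum_image (fun x _ y _ h => Sym2.map.injective hfinj h)
  have hsum : TCL (n + 1) (subdiv n T) ≤ ∑ p ∈ T, chordLen (Sym2.map f p) + 2 := by
    have hui := Finset.sum_union_inter (s₁ := T.image (Sym2.map f))
      (s₂ := {s(((n - 1 : ℕ) : ZMod (n + 1)), (0 : ZMod (n + 1)))}) (f := chordLen)
    unfold TCL subdiv
    rw [← hf]
    have hsingle : ∑ p ∈ ({s(((n - 1 : ℕ) : ZMod (n + 1)), (0 : ZMod (n + 1)))} :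
        Finset (Sym2 (ZMod (n + 1)))), chordLen p = 2 := by
      rw [Finset.sum_singleton, hnew]
    omega
  -- the set of chords whose length grows
  set S := T.filter (fun p => n < 2 * gap p) with hS
  have hsplit : ∑ p ∈ T, chordLen (Sym2.map f p) = TCL n T + S.card := by
    calc ∑ p ∈ T, chordLen (Sym2.map f p)
        = ∑ p ∈ T, (chordLen p + (if n < 2 * gap p then 1 else 0)) := by
          refine Finset.sum_congr rfl fun p _ => ?_
          exact chordLen_map p
      _ = TCL n T + ∑ p ∈ T, (if n < 2 * gap p then 1 else 0) := by
          rw [Finset.sum_add_distrib]; rfl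
      _ = TCL n T + S.card := by
          rw [hS, ← Finset.sum_filter, Finset.sum_const, smul_eq_mul, mul_one]
  -- bound the cardinality of S
  have hcard : S.card ≤ n - 2 - n / 2 := by
    have hinj : Set.InjOn gap (S : Set (Sym2 (ZMod n))) := by
      intro p hp q hq h
      simp only [hS, Finset.coe_filter, Set.mem_setOf_eq] at hp hq
      exact gap_inj hT hp.1 hq.1 hp.2 hq.2 h
    have hsub : S.image gap ⊆ Finset.Icc (n / 2 + 1) (n - 2) := by
      intro m hm
      obtain ⟨p, hp, rfl⟩ := Finset.mem_image.mp hm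
      rw [hS, Finset.mem_filter] at hp
      have h2 : 2 ≤ chordLen p := hT.2.1 p hp.1
      rw [chordLen_eq_gap] at h2
      have h3 := gap_lt p
      have h4 := hp.2
      rw [Finset.mem_Icc]
      omega
    calc S.card = (S.image gap).card := (Finset.card_image_of_injOn hinj).symm
      _ ≤ (Finset.Icc (n / 2 + 1) (n - 2)).card := Finset.card_le_card hsub
      _ = n - 2 - n / 2 := by rw [Nat.card_Icc]; omega
  have hmain : 2 * TCL (n + 1) (subdiv n T) ≤ 2 * TCL n T + 2 * S.card + 4 := by omega
  constructor
  · omega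
  · rintro ⟨p, hp, hd⟩
    have hd' : 2 * chordLen p = n := hd
    omega
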